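/- Let p, q : ℝ → ℂ and β ∈ ℝ. For t ∈ ℝ and λ ∈ ℂ define the 2×2 matrices V(t,λ) with entries V₁₁ = (i/2)λ² − i|p(t)|², V₁₂ = conj(p(t))·λ + i·conj(q(t)), V₂₁ = −p(t)·λ + i·q(t), V₂₂ = −(i/2)λ² + i|p(t)|², and the constant diagonal matrix K(λ) = diag(−λ + iβ, λ + iβ). Then V(t,λ)·K(λ) − K(λ)·V(t,−λ) = 0 for all λ ∈ ℂ and all t ∈ ℝ if and only if q(t) + β·p(t) = 0 for all t ∈ ℝ. -/
import Mathlib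


open Complex Matrix ComplexConjugate

noncomputable section

/-- The time-part Lax matrix `V(t,λ)` of the NLS equation evaluated at `x = 0`, where
`p(t) = u(0,t)` and `q(t) = uₓ(0,t)`. -/
def Vbdry (p q : ℝ → ℂ) (t : ℝ) (lam : ℂ) : Matrix (Fin 2) (Fin 2) ℂ :=
  !![(I / 2) * lam ^ 2 - I * (‖p t‖ : ℂ) ^ 2, conj (p t) * lam + I * conj (q t);
     -(p t) * lam + I * q t, -((I / 2) * lam ^ 2) + I * (‖p t‖ : ℂ) ^ 2]

/-- Sklyanin's constant boundary matrix `K(λ) = diag(−λ + iβ, λ + iβ)`. -/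
def Krobin (β : ℝ) (lam : ℂ) : Matrix (Fin 2) (Fin 2) ℂ :=
  !![-lam + I * (β : ℂ), 0; 0, lam + I * (β : ℂ)]

/-- `V(t,λ)K(λ) − K(λ)V(t,−λ) = 0` holds for all `λ` and `t` if and only if the Robin
boundary condition `q(t) + β p(t) = 0` holds for all `t`. -/
theorem robin_boundary_condition (p q : ℝ → ℂ) (β : ℝ) :
    (∀ (lam : ℂ) (t : ℝ),
        Vbdry p q t lam * Krobin β lam - Krobin β lam * Vbdry p q t (-lam) = 0)
      ↔ (∀ t : ℝ, q t + (β : ℂ) * p t = 0) := by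
  constructor
  · intro h t
    have h1 := congrFun (congrFun (h 1 t) 1) 0
    simp [Vbdry, Krobin, Matrix.mul_fin_two, Matrix.sub_apply] at h1
    have : (-2 * I) * (q t + (β : ℂ) * p t) = 0 := by linear_combination h1
    have h2 : (-2 * I : ℂ) ≠ 0 := by simp [Complex.ext_iff]
    exact (mul_eq_zero.mp this).resolve_left h2
  · intro h lam t
    have hq : q t = -(β : ℂ) * p t := by linear_combination h t
    have hqc : conj (q t) = -(β : ℂ) * conj (p t) := by
      rw [hq]; simp
    ext i j
    fin_cases i <;> fin_cases j <;>
      simp [Vbdry, Krobin, Matrix.mul_fin_two, Matrix.sub_apply, hq, hqc] <;>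
      ring
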